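/- Let p be an odd prime, m ≥ 1, q = p^m, d ≥ 2, and let j be a unit of ℤ/qℤ. For s ∈ ℤ/qℤ let G(s,q) = Σ_{x ∈ ℤ/qℤ} exp(2πi s x²/q) be the quadratic Gauss sum. Then | Σ_{s ∈ (ℤ/qℤ)^×} G(s,q)^d · exp(−2πi s j/q) | ≤ p^{md/2} · ( p^{m/2} + p^{m−1} ). -/

import Mathlib

/-!
For `m ≥ 2` the sum vanishes: `ε = p ^ (m - 1)` satisfies `ε ^ 2 = 0`, so the substitution
`s ↦ s (1 + ε a) ^ 2 = s (1 + 2 ε a)` leaves `G(s)` unchanged and twists the summand by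
`ψ (2 ε j s a)` (`ψ` the standard additive character), which averages to zero over `a`.
For `m = 1`, counting square roots gives `G(s) = χ(s) g` with `χ` the quadratic character and
`g` its Gauss sum, `|g| = √p`; the sum is then `g ^ d` times the Gauss sum of `χ ^ d` twisted
by `j`, of absolute value `1` or `√p`.
-/

/-- The canonical additive character of `ℤ/qℤ`: `c ↦ exp(2πi·c̃/q)` where `c̃` is the
canonical integer representative of `c`. -/
noncomputable def eZMod (q : ℕ) (c : ZMod q) : ℂ :=
  Complex.exp (2 * Real.pi * Complex.I * c.val / q)

open Finset AddChar

section CommRing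

variable {R : Type*} [CommRing R] [Fintype R]

def quadraticGaussSum (ψ : AddChar R ℂ) (a : R) : ℂ := ∑ x, ψ (a * x ^ 2)

lemma quadraticGaussSum_mul_sq (ψ : AddChar R ℂ) (a : R) (u : Rˣ) :
    quadraticGaussSum ψ (a * u ^ 2) = quadraticGaussSum ψ a :=
  Fintype.sum_equiv (Units.mulLeft u) _ _ fun x ↦ by
    simp only [Units.mulLeft_apply]
    ring_nf

theorem sum_units_mul_addChar_eq_zero_of_sq_eq_zero [DecidableEq R] {ψ : AddChar R ℂ}
    (hψ : ψ.IsPrimitive) {F : Rˣ → ℂ} (hF : ∀ s u : Rˣ, F (s * u ^ 2) = F s) {ε j : R}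
    (hε : ε ^ 2 = 0) (hεj : 2 * ε * j ≠ 0) : ∑ s : Rˣ, F s * ψ (s * j) = 0 := by
  set S := ∑ s : Rˣ, F s * ψ (s * j)
  have shift (a : R) : S = ∑ s : Rˣ, F s * ψ (s * j) * ψ (a * (s * (2 * ε * j))) := by
    have hu : IsUnit (1 + ε * a) :=
      IsNilpotent.isUnit_one_add ⟨2, by rw [mul_pow, hε, zero_mul]⟩
    refine (Fintype.sum_equiv (Equiv.mulRight (hu.unit ^ 2)) _ _ fun s ↦ ?_).symm
    simp only [Equiv.coe_mulRight, hF, Units.val_mul, Units.val_pow_eq_pow_val, hu.unit_spec,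
      mul_assoc, ← map_add_eq_mul]
    congr 2
    linear_combination -(s : R) * j * a ^ 2 * hε
  have hsum : (Fintype.card R : ℂ) * S = 0 := calc
    (Fintype.card R : ℂ) * S
        = ∑ a : R, ∑ s : Rˣ, F s * ψ (s * j) * ψ (a * (s * (2 * ε * j))) := by
      rw [← nsmul_eq_mul, ← Finset.card_univ, ← Finset.sum_const]
      exact Finset.sum_congr rfl fun a _ ↦ shift a
    _ = ∑ s : Rˣ, F s * ψ (s * j) * ∑ a : R, ψ (a * (s * (2 * ε * j))) := by
      rw [Finset.sum_comm]
      simp only [Finset.mul_sum]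
    _ = 0 := Finset.sum_eq_zero fun s _ ↦ by
      rw [sum_mulShift _ hψ, if_neg ((Units.mul_right_eq_zero s).not.mpr hεj), Nat.cast_zero,
        mul_zero]
  exact (mul_eq_zero.mp hsum).resolve_left (Nat.cast_ne_zero.mpr Fintype.card_ne_zero)

end CommRing

section FiniteField

variable {F : Type*} [Field F] [Fintype F]

lemma gaussSum_eq_sum_units {R' : Type*} [CommRing R'] [DecidableEq F] (χ : MulChar F R')
    (ψ : AddChar F R') : gaussSum χ ψ = ∑ u : Fˣ, χ u * ψ u :=
  (Fintype.sum_of_injective _ Units.val_injective _ _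
    (fun x hx ↦ by
      rw [MulChar.map_nonunit χ fun h ↦ hx ⟨h.unit, rfl⟩, zero_mul])
    fun _ ↦ rfl).symm

lemma norm_gaussSum {χ : MulChar F ℂ} (hχ : χ ≠ 1) {ψ : AddChar F ℂ} (hψ : ψ.IsPrimitive) :
    ‖gaussSum χ ψ‖ = √(Fintype.card F) := by
  have h := gaussSum_mul_gaussSum_eq_card hχ hψ
  rw [← star_gaussSum_eq, Complex.star_def, Complex.mul_conj] at h
  rw [Complex.norm_def, ← Complex.ofReal_natCast] at *
  rw [Complex.ofReal_inj.mp h]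

variable [DecidableEq F]

variable (F) in
abbrev complexQuadraticChar : MulChar F ℂ := (quadraticChar F).ringHomComp (Int.castRingHom ℂ)

theorem quadraticGaussSum_eq_mul_gaussSum (hF : ringChar F ≠ 2) {ψ : AddChar F ℂ}
    (hψ : ψ.IsPrimitive) {a : F} (ha : a ≠ 0) :
    quadraticGaussSum ψ a = complexQuadraticChar F a * gaussSum (complexQuadraticChar F) ψ := calc
  quadraticGaussSum ψ a = ∑ y : F, ((quadraticChar F y : ℂ) + 1) * ψ (a * y) := by
    rw [quadraticGaussSum, ← Finset.sum_fiberwise' univ (· ^ 2) fun y ↦ ψ (a * y)]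
    refine Finset.sum_congr rfl fun y _ ↦ ?_
    rw [Finset.sum_const, nsmul_eq_mul, ← Set.toFinset_ofPred, ← Int.cast_natCast,
      quadraticChar_card_sqrts hF, Int.cast_add, Int.cast_one]
  _ = gaussSum (complexQuadraticChar F) (mulShift ψ a) := by
    simp only [add_mul, one_mul, Finset.sum_add_distrib, gaussSum, mulShift_apply,
      MulChar.ringHomComp_apply, eq_intCast]
    rw [add_eq_left]
    simpa [mul_comm a, ha] using sum_mulShift a hψ
  _ = complexQuadraticChar F a * gaussSum (complexQuadraticChar F) ψ := by
    have := gaussSum_mulShift_eq (complexQuadraticChar F) ψ (Units.mk0 a ha)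
    rwa [((quadraticChar_isQuadratic F).comp _).inv] at this

omit [DecidableEq F] in
lemma norm_gaussSum_pow_le {χ : MulChar F ℂ} (hχ : χ.IsQuadratic) (hχ₁ : χ ≠ 1)
    {ψ : AddChar F ℂ} (hψ : ψ.IsPrimitive) (d : ℕ) :
    ‖gaussSum (χ ^ d) ψ‖ ≤ √(Fintype.card F) := by
  rcases d.even_or_odd with hd | hd
  · have hψ₁ : ψ ≠ 1 := by simpa only [mulShift_one] using hψ one_ne_zero
    rw [hχ.pow_even hd, gaussSum_one_left hψ₁, norm_neg, norm_one]
    exact Real.one_le_sqrt.mpr (Nat.one_le_cast.mpr Fintype.card_pos)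
  · rw [hχ.pow_odd hd, norm_gaussSum hχ₁ hψ]

theorem norm_sum_units_quadraticGaussSum_pow_mul_le (hF : ringChar F ≠ 2) {ψ : AddChar F ℂ}
    (hψ : ψ.IsPrimitive) (d : ℕ) {j : F} (hj : j ≠ 0) :
    ‖∑ s : Fˣ, quadraticGaussSum ψ s ^ d * ψ (s * j)‖ ≤ √(Fintype.card F) ^ (d + 1) := by
  have hχ := (quadraticChar_isQuadratic F).comp (Int.castRingHom ℂ)
  have hχ₁ : complexQuadraticChar F ≠ 1 :=
    (MulChar.ringHomComp_ne_one_iff Int.cast_injective).mpr (quadraticChar_ne_one hF)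
  have hψj : (mulShift ψ j).IsPrimitive := IsPrimitive.of_ne_one (hψ hj)
  have hsum : ∑ s : Fˣ, quadraticGaussSum ψ s ^ d * ψ (s * j) =
      gaussSum (complexQuadraticChar F) ψ ^ d *
        gaussSum (complexQuadraticChar F ^ d) (mulShift ψ j) := by
    rw [gaussSum_eq_sum_units (_ ^ d), Finset.mul_sum]
    refine Finset.sum_congr rfl fun s _ ↦ ?_
    rw [quadraticGaussSum_eq_mul_gaussSum hF hψ s.ne_zero, MulChar.pow_apply_coe,
      mulShift_apply, mul_comm j]
    ring
  rw [hsum, norm_mul, norm_pow, norm_gaussSum hχ₁ hψ, pow_succ]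
  gcongr
  exact norm_gaussSum_pow_le hχ hχ₁ hψj d

end FiniteField

lemma eZMod_eq_stdAddChar {q : ℕ} [NeZero q] (c : ZMod q) : eZMod q c = ZMod.stdAddChar c := by
  rw [ZMod.stdAddChar_apply, ZMod.toCircle_apply, eZMod]

lemma ZMod.isUnit_two_of_odd {n : ℕ} (hn : Odd n) : IsUnit (2 : ZMod n) := by
  simpa using (ZMod.isUnit_iff_coprime 2 n).mpr (Nat.coprime_two_left.mpr hn)

lemma ZMod.natCast_pow_pred_sq_eq_zero {p m : ℕ} (hm : 2 ≤ m) :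
    ((p ^ (m - 1) : ℕ) : ZMod (p ^ m)) ^ 2 = 0 := by
  rw [← Nat.cast_pow, ZMod.natCast_eq_zero_iff, ← pow_mul]
  exact pow_dvd_pow p (by omega)

lemma ZMod.natCast_pow_pred_ne_zero {p m : ℕ} (hp : p.Prime) (hm : 1 ≤ m) :
    ((p ^ (m - 1) : ℕ) : ZMod (p ^ m)) ≠ 0 := by
  rw [Ne, ZMod.natCast_eq_zero_iff, Nat.pow_dvd_pow_iff_le_right hp.one_lt]
  omega

theorem ZMod.sum_units_quadraticGaussSum_pow_mul_eq_zero {p m : ℕ} [Fact p.Prime] (hodd : Odd p)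
    (hm : 2 ≤ m) (d : ℕ) {j : ZMod (p ^ m)} (hj : IsUnit j) :
    ∑ s : (ZMod (p ^ m))ˣ,
      quadraticGaussSum ZMod.stdAddChar (s : ZMod (p ^ m)) ^ d *
        ZMod.stdAddChar ((s : ZMod (p ^ m)) * j) = 0 := by
  refine sum_units_mul_addChar_eq_zero_of_sq_eq_zero (ZMod.isPrimitive_stdAddChar _)
    (fun s u ↦ by rw [Units.val_mul, Units.val_pow_eq_pow_val, quadraticGaussSum_mul_sq])
    (ZMod.natCast_pow_pred_sq_eq_zero hm) ?_
  rw [Ne, hj.mul_left_eq_zero, (ZMod.isUnit_two_of_odd hodd.pow).mul_right_eq_zero]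
  exact ZMod.natCast_pow_pred_ne_zero Fact.out (by omega)

lemma Real.sqrt_pow_succ_le {x : ℝ} (hx : 0 < x) (d : ℕ) :
    √x ^ (d + 1) ≤ x ^ ((d : ℝ) / 2) * (x ^ ((1 : ℝ) / 2) + 1) := by
  rw [Real.sqrt_eq_rpow, ← Real.rpow_natCast, ← Real.rpow_mul hx.le, Nat.cast_succ,
    show (1 / 2 : ℝ) * (d + 1) = d / 2 + 1 / 2 by ring, Real.rpow_add hx]
  gcongr
  exact le_add_of_nonneg_right zero_le_one

theorem gauss_sum_power_estimate_general (p m d : ℕ) [Fact p.Prime] (hodd : Odd p)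
    (hm : 1 ≤ m) (j : ZMod (p ^ m)) (hj : IsUnit j) :
    ‖(∑ s : (ZMod (p ^ m))ˣ,
        (∑ x : ZMod (p ^ m), eZMod (p ^ m) ((s : ZMod (p ^ m)) * x ^ 2)) ^ d *
          eZMod (p ^ m) (-((s : ZMod (p ^ m)) * j)))‖ ≤
      (p : ℝ) ^ ((m : ℝ) * d / 2) * ((p : ℝ) ^ ((m : ℝ) / 2) + (p : ℝ) ^ ((m : ℝ) - 1)) := by
  simp only [eZMod_eq_stdAddChar, ← mul_neg, ← quadraticGaussSum.eq_1]
  obtain rfl | hm₂ : m = 1 ∨ 2 ≤ m := by omega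
  · have : Fact (p ^ 1).Prime := ⟨by rw [pow_one]; exact Fact.out⟩
    have hF : ringChar (ZMod (p ^ 1)) ≠ 2 := by
      rw [ZMod.ringChar_zmod_n]
      exact hodd.pow.ne_two_of_dvd_nat dvd_rfl
    refine (norm_sum_units_quadraticGaussSum_pow_mul_le hF (ZMod.isPrimitive_stdAddChar _) d
      (neg_ne_zero.mpr hj.ne_zero)).trans ?_
    rw [ZMod.card, Nat.cast_pow, pow_one, Nat.cast_one, one_mul, sub_self, Real.rpow_zero]
    exact Real.sqrt_pow_succ_le (Nat.cast_pos.mpr (Fact.out : p.Prime).pos) d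
  · rw [ZMod.sum_units_quadraticGaussSum_pow_mul_eq_zero hodd hm₂ d hj.neg, norm_zero]
    positivity

/-- **Gauss sum power estimate.** Let `p` be an odd prime, `m ≥ 1`, `q = p^m`, `d ≥ 2`,
and `j` a unit of `ℤ/qℤ`. With `G(s,q) = Σ_{x ∈ ℤ/qℤ} exp(2πi·sx²/q)`, one has
`|Σ_{s ∈ (ℤ/qℤ)ˣ} G(s,q)^d·exp(−2πi·sj/q)| ≤ p^{md/2}·(p^{m/2} + p^{m−1})`. -/
theorem gauss_sum_power_estimate (p m d : ℕ) [Fact p.Prime] (hodd : Odd p)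
    (hm : 1 ≤ m) (hd : 2 ≤ d) (j : ZMod (p ^ m)) (hj : IsUnit j) :
    ‖(∑ s : (ZMod (p ^ m))ˣ,
        (∑ x : ZMod (p ^ m), eZMod (p ^ m) ((s : ZMod (p ^ m)) * x ^ 2)) ^ d *
          eZMod (p ^ m) (-((s : ZMod (p ^ m)) * j)))‖ ≤
      (p : ℝ) ^ ((m : ℝ) * d / 2) * ((p : ℝ) ^ ((m : ℝ) / 2) + (p : ℝ) ^ ((m : ℝ) - 1)) :=
  gauss_sum_power_estimate_general p m d hodd hm j hj
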